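/- arXiv:1411.6915 — 4 statements merged into one kernel-verified Lean document; each statement's English description precedes it below -/
import Mathlib

section
/- Let S be a collection of distinct subsets of a universe U, each of size at most r, and define the transformed collection S^T over universe U^T = (U × {1,...,t}) ∪ S consisting of all sets of the form {(u_1,j_1),...,(u_{r'},j_{r'}), S} where S = {u_1,...,u_{r'}} ∈ S and 1 ≤ j_i ≤ t. Then S has a collection of k sets such that every element of U lies in at most t of them if and only if S^T contains k pairwise disjoint sets. -/
/-!
Choosing `k` sets with every point in at most `t` of them amounts to colouring the chosen sets
pointwise with `t` colours so that at each `u` the chosen sets containing `u` get distinct colours.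
Labelling every `u ∈ S` by the colour of `S` at `u` turns such a choice into disjoint members of
`S^T`; conversely, two labelled copies are disjoint exactly when their base sets differ (because of
the tag `inr S`) and their labels differ at every shared point.
-/

open Finset

theorem Finset.exists_injOn_of_card_le {γ β : Type*} [Fintype β] [Nonempty β] {s : Finset γ}
    (h : #s ≤ Fintype.card β) : ∃ g : γ → β, Set.InjOn g s := by
  obtain ⟨e⟩ : Nonempty (s ↪ β) := Function.Embedding.nonempty_iff_card_le.2 (by simpa using h)
  exact Set.exists_injOn_iff_injective.2 ⟨e, e.injective⟩

section LabelledCopy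

variable {α β : Type*} [DecidableEq α] [DecidableEq β]

/-- The member `{(u₁, j u₁), …, (u_r, j u_r), S}` of `S^T`. -/
def labelledCopy (S : Finset α) (j : α → β) : Finset (α × β ⊕ Finset α) :=
  S.image (fun u => Sum.inl (u, j u)) ∪ {Sum.inr S}

@[simp]
theorem inr_mem_labelledCopy {S A : Finset α} {j : α → β} :
    Sum.inr A ∈ labelledCopy S j ↔ A = S := by
  simp [labelledCopy]

@[simp]
theorem inl_mem_labelledCopy {S : Finset α} {j : α → β} {u : α} {b : β} :
    Sum.inl (u, b) ∈ labelledCopy S j ↔ u ∈ S ∧ j u = b := by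
  simp [labelledCopy]

theorem disjoint_labelledCopy_iff {S S' : Finset α} {j j' : α → β} :
    Disjoint (labelledCopy S j) (labelledCopy S' j') ↔
      S ≠ S' ∧ ∀ u ∈ S, u ∈ S' → j u ≠ j' u := by
  constructor
  · intro h
    refine ⟨fun hS => disjoint_left.1 h (inr_mem_labelledCopy.2 rfl) (inr_mem_labelledCopy.2 hS),
      fun u hu hu' hj => ?_⟩
    exact disjoint_left.1 h (inl_mem_labelledCopy.2 ⟨hu, rfl⟩)
      (inl_mem_labelledCopy.2 ⟨hu', hj.symm⟩)
  · rintro ⟨hS, hj⟩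
    rw [disjoint_left]
    rintro (⟨u, b⟩ | A) hx hx'
    · obtain ⟨hu, rfl⟩ := inl_mem_labelledCopy.1 hx
      obtain ⟨hu', hb⟩ := inl_mem_labelledCopy.1 hx'
      exact hj u hu hu' hb.symm
    · exact hS ((inr_mem_labelledCopy.1 hx).symm.trans (inr_mem_labelledCopy.1 hx'))

theorem pairwise_disjoint_image_labelledCopy {K : Finset (Finset α)} {c : α → Finset α → β}
    (hc : ∀ u, Set.InjOn (c u) (K.filter (u ∈ ·))) :
    (K.image fun S => labelledCopy S (c · S) : Set (Finset (α × β ⊕ Finset α))).Pairwise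
      Disjoint := by
  rw [coe_image]
  rintro _ ⟨S, hS, rfl⟩ _ ⟨S', hS', rfl⟩ hne
  have hSS' : S ≠ S' := fun h => hne (h ▸ rfl)
  rw [disjoint_labelledCopy_iff]
  exact ⟨hSS', fun u hu hu' h =>
    hSS' (hc u (mem_filter.2 ⟨hS, hu⟩) (mem_filter.2 ⟨hS', hu'⟩) h)⟩

theorem card_image_labelledCopy (K : Finset (Finset α)) (c : Finset α → α → β) :
    #(K.image fun S => labelledCopy S (c S)) = #K :=
  card_image_of_injective _ fun _ _ h => inr_mem_labelledCopy.1 (h ▸ inr_mem_labelledCopy.2 rfl)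

variable {KT : Finset (Finset (α × β ⊕ Finset α))} {S : Finset (α × β ⊕ Finset α) → Finset α}
  {j : Finset (α × β ⊕ Finset α) → α → β}

theorem injOn_of_pairwise_disjoint_labelledCopy
    (hKT : (KT : Set (Finset (α × β ⊕ Finset α))).Pairwise Disjoint)
    (hT : ∀ T ∈ KT, T = labelledCopy (S T) (j T)) : Set.InjOn S KT := by
  intro T hT₁ T' hT₁' hS
  by_contra hne
  have := hKT hT₁ hT₁' hne
  rw [hT T hT₁, hT T' hT₁', disjoint_labelledCopy_iff] at this
  exact this.1 hS

theorem card_filter_mem_image_le [Fintype β]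
    (hKT : (KT : Set (Finset (α × β ⊕ Finset α))).Pairwise Disjoint)
    (hT : ∀ T ∈ KT, T = labelledCopy (S T) (j T)) (u : α) :
    #((KT.image S).filter (u ∈ ·)) ≤ Fintype.card β := by
  rw [filter_image]
  calc #((KT.filter (u ∈ S ·)).image S) ≤ #(KT.filter (u ∈ S ·)) := card_image_le
    _ ≤ #(univ : Finset β) := by
      refine card_le_card_of_injOn (j · u) (fun _ _ => mem_univ _) ?_
      intro T hT₁ T' hT₁' hj
      rw [mem_coe, mem_filter] at hT₁ hT₁'
      by_contra hne
      have := hKT hT₁.1 hT₁'.1 hne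
      rw [hT T hT₁.1, hT T' hT₁'.1, disjoint_labelledCopy_iff] at this
      exact this.2 u hT₁.2 hT₁'.2 hj
    _ = Fintype.card β := card_univ

end LabelledCopy

theorem stmt5_general {α : Type*} [DecidableEq α] (t k : ℕ) (ht : 1 ≤ t)
    (𝒮 : Finset (Finset α))
    (ST : Finset (Finset (α × Fin t ⊕ Finset α)))
    (hST : ∀ T, T ∈ ST ↔ ∃ S ∈ 𝒮, ∃ j : α → Fin t,
      T = S.image (fun u => Sum.inl (u, j u)) ∪ {Sum.inr S}) :
    (∃ K ⊆ 𝒮, K.card = k ∧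
        ∀ u : α, (K.filter (fun S => u ∈ S)).card ≤ t) ↔
      (∃ KT ⊆ ST, KT.card = k ∧
        ∀ T ∈ KT, ∀ T' ∈ KT, T ≠ T' → Disjoint T T') := by
  have : Nonempty (Fin t) := ⟨⟨0, ht⟩⟩
  constructor
  · rintro ⟨K, hK𝒮, rfl, hKt⟩
    choose c hc using fun u => exists_injOn_of_card_le (β := Fin t) (by simpa using hKt u)
    refine ⟨K.image fun S => labelledCopy S (c · S), fun T hT => ?_,
      card_image_labelledCopy _ _, pairwise_disjoint_image_labelledCopy hc⟩
    obtain ⟨S, hS, rfl⟩ := mem_image.1 hT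
    exact (hST _).2 ⟨S, hK𝒮 hS, _, rfl⟩
  · rintro ⟨KT, hKT, rfl, hdisj⟩
    have hrep (T) : ∃ S, ∃ j : α → Fin t, T ∈ KT → S ∈ 𝒮 ∧ T = labelledCopy S j := by
      by_cases hT : T ∈ KT
      · obtain ⟨S, hS, j, rfl⟩ := (hST T).1 (hKT hT)
        exact ⟨S, j, fun _ => ⟨hS, rfl⟩⟩
      · exact ⟨∅, Classical.arbitrary _, fun h => absurd h hT⟩
    choose S j hSj using hrep
    have hKT_eq (T) (hT : T ∈ KT) := (hSj T hT).2
    refine ⟨KT.image S, fun _ hA => ?_,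
      card_image_of_injOn (injOn_of_pairwise_disjoint_labelledCopy hdisj hKT_eq), fun u => ?_⟩
    · obtain ⟨T, hT, rfl⟩ := mem_image.1 hA
      exact (hSj T hT).1
    · simpa using card_filter_mem_image_le hdisj hKT_eq u

theorem stmt5 {α : Type*} [DecidableEq α] (r t k : ℕ) (ht : 1 ≤ t)
    (𝒮 : Finset (Finset α)) (hr : ∀ S ∈ 𝒮, S.card ≤ r)
    (ST : Finset (Finset (α × Fin t ⊕ Finset α)))
    (hST : ∀ T, T ∈ ST ↔ ∃ S ∈ 𝒮, ∃ j : α → Fin t,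
      T = S.image (fun u => Sum.inl (u, j u)) ∪ {Sum.inr S}) :
    (∃ K ⊆ 𝒮, K.card = k ∧
        ∀ u : α, (K.filter (fun S => u ∈ S)).card ≤ t) ↔
      (∃ KT ⊆ ST, KT.card = k ∧
        ∀ T ∈ KT, ∀ T' ∈ KT, T ≠ T' → Disjoint T T') :=
  stmt5_general t k ht 𝒮 ST hST
end

section
/- Let R be a maximal collection of sets from S such that every pair of distinct sets in R overlaps in at most r-2 elements, where every set in S has size at least t+1 and at most r, every element of the universe lies in some set of S, and t ≤ r-2. Let O be the set of universe elements not covered by R. Then: (i) every element of O is contained in at least one set of S; (ii) every set of S containing an element of O lies in S \ R; (iii) no set in S \ R contains two distinct elements of O; and (iv) every set in S \ R containing an element of O consists of exactly one element of O together with r-1 elements of some single set in R. -/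
theorem stmt8 {α : Type*} [Fintype α] [DecidableEq α] (r t : ℕ)
    (hrt : t + 2 ≤ r) (𝒮 R : Finset (Finset α))
    (hsize : ∀ S ∈ 𝒮, t + 1 ≤ S.card ∧ S.card ≤ r)
    (hcover : ∀ u : α, ∃ S ∈ 𝒮, u ∈ S)
    (hR : R ⊆ 𝒮)
    (hover : ∀ S ∈ R, ∀ S' ∈ R, S ≠ S' → (S ∩ S').card ≤ r - 2)
    (hmax : ∀ S ∈ 𝒮, S ∉ R → ∃ S' ∈ R, r - 1 ≤ (S ∩ S').card)
    (O : Finset α) (hO : O = Finset.univ \ R.biUnion id) :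
    (∀ o ∈ O, ∃ S ∈ 𝒮, o ∈ S) ∧
    (∀ S ∈ 𝒮, (∃ o ∈ O, o ∈ S) → S ∉ R) ∧
    (∀ S ∈ 𝒮, S ∉ R → ∀ o₁ ∈ O, ∀ o₂ ∈ O, o₁ ∈ S → o₂ ∈ S → o₁ = o₂) ∧
    (∀ S ∈ 𝒮, S ∉ R → ∀ o ∈ O, o ∈ S →
      ∃ S' ∈ R, S \ {o} ⊆ S' ∧ (S \ {o}).card = r - 1) := by
  have hOmem : ∀ o ∈ O, ∀ S' ∈ R, o ∉ S' := by
    intro o ho S' hS' h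
    rw [hO] at ho
    simp only [Finset.mem_sdiff, Finset.mem_biUnion, id] at ho
    exact ho.2 ⟨S', hS', h⟩
  refine ⟨fun o _ => hcover o, ?_, ?_, ?_⟩
  · rintro S hS ⟨o, ho, hoS⟩ hSR
    exact hOmem o ho S hSR hoS
  · intro S hS hSR o₁ ho₁ o₂ ho₂ h1 h2
    obtain ⟨S', hS', hcard⟩ := hmax S hS hSR
    have hcardS : S.card ≤ r := (hsize S hS).2
    have hie : (S ∩ S').card + (S \ S').card = S.card :=
      Finset.card_inter_add_card_sdiff S S'
    have hle : (S \ S').card ≤ 1 := by omega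
    have h1' : o₁ ∈ S \ S' := Finset.mem_sdiff.mpr ⟨h1, hOmem o₁ ho₁ S' hS'⟩
    have h2' : o₂ ∈ S \ S' := Finset.mem_sdiff.mpr ⟨h2, hOmem o₂ ho₂ S' hS'⟩
    exact Finset.card_le_one.mp hle _ h1' _ h2'
  · intro S hS hSR o ho hoS
    obtain ⟨S', hS', hcard⟩ := hmax S hS hSR
    have hcardS : S.card ≤ r := (hsize S hS).2
    have hsub : S ∩ S' ⊆ S \ {o} := by
      intro x hx
      simp only [Finset.mem_inter] at hx
      simp only [Finset.mem_sdiff, Finset.mem_singleton]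
      exact ⟨hx.1, fun h => hOmem o ho S' hS' (h ▸ hx.2)⟩
    have hc' : (S \ {o}).card = S.card - 1 := by
      rw [Finset.card_sdiff_of_subset (Finset.singleton_subset_iff.mpr hoS), Finset.card_singleton]
    have hge : 1 ≤ S.card := Finset.card_pos.mpr ⟨o, hoS⟩
    have heq : S ∩ S' = S \ {o} :=
      Finset.eq_of_subset_of_card_le hsub (by omega)
    have hsub' : S \ {o} ⊆ S' := heq ▸ Finset.inter_subset_right
    have hcard2 : (S ∩ S').card ≤ (S \ {o}).card := Finset.card_le_card hsub
    exact ⟨S', hS', hsub', by omega⟩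
end

section
/- Let P be a set of i ≥ t+1 elements and let P' be a family of distinct sets, each of size at most r, that pairwise intersect exactly in P and each contain P. Let S* be a set of size at most r with |P ∩ S*| = l ≤ t. Then at most (r-l)/(t+1-l) sets in P' intersect S* in more than t elements; in particular at most (r-t) sets of P' conflict with S* when l = t. -/
theorem stmt10 {α : Type*} [DecidableEq α] (r t i l : ℕ)
    (P : Finset α) (hPi : P.card = i) (hit : t + 1 ≤ i)
    (Pcal : Finset (Finset α))
    (hsub : ∀ A ∈ Pcal, P ⊆ A ∧ A.card ≤ r)
    (hpair : ∀ A ∈ Pcal, ∀ B ∈ Pcal, A ≠ B → A ∩ B = P)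
    (Sstar : Finset α) (hS : Sstar.card ≤ r)
    (hl : (P ∩ Sstar).card = l) (hlt : l ≤ t) :
    (Pcal.filter (fun A => t + 1 ≤ (A ∩ Sstar).card)).card ≤ (r - l) / (t + 1 - l) ∧
    (l = t → (Pcal.filter (fun A => t + 1 ≤ (A ∩ Sstar).card)).card ≤ r - t) := by
  set F := Pcal.filter (fun A => t + 1 ≤ (A ∩ Sstar).card) with hF
  have key : F.card * (t + 1 - l) ≤ r - l := by
    have hdisj : (F : Set (Finset α)).PairwiseDisjoint
        (fun A => (A ∩ Sstar) \ P) := by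
      intro A hA B hB hAB
      simp only [Finset.coe_filter, Set.mem_setOf_eq, hF] at hA hB
      refine Finset.disjoint_left.mpr ?_
      intro x hx hx'
      simp only [Finset.mem_sdiff, Finset.mem_inter] at hx hx'
      have : x ∈ A ∩ B := Finset.mem_inter.mpr ⟨hx.1.1, hx'.1.1⟩
      rw [hpair A hA.1 B hB.1 hAB] at this
      exact hx.2 this
    have hunion : F.biUnion (fun A => (A ∩ Sstar) \ P) ⊆ Sstar \ P := by
      intro x hx
      simp only [Finset.mem_biUnion, Finset.mem_sdiff, Finset.mem_inter] at hx ⊢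
      obtain ⟨A, _, hx1, hx2⟩ := hx
      exact ⟨hx1.2, hx2⟩
    have hcard1 : ∑ A ∈ F, ((A ∩ Sstar) \ P).card ≤ (Sstar \ P).card := by
      rw [← Finset.card_biUnion (fun A hA B hB hAB => hdisj hA hB hAB)]
      exact Finset.card_le_card hunion
    have hlow : ∀ A ∈ F, t + 1 - l ≤ ((A ∩ Sstar) \ P).card := by
      intro A hA
      have hA' := Finset.mem_filter.mp hA
      have h1 : ((A ∩ Sstar) ∩ P).card ≤ l := by
        rw [← hl]
        apply Finset.card_le_card
        intro x hx
        simp only [Finset.mem_inter] at hx ⊢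
        exact ⟨hx.2, hx.1.2⟩
      have := Finset.card_sdiff_add_card_inter (A ∩ Sstar) P
      omega
    have hsum : F.card * (t + 1 - l) ≤ ∑ A ∈ F, ((A ∩ Sstar) \ P).card := by
      calc F.card * (t + 1 - l) = ∑ _A ∈ F, (t + 1 - l) := by
            rw [Finset.sum_const, smul_eq_mul]
          _ ≤ _ := Finset.sum_le_sum hlow
    have hsd : (Sstar \ P).card ≤ r - l := by
      have := Finset.card_sdiff_add_card_inter Sstar P
      rw [Finset.inter_comm] at this
      omega
    omega
  constructor
  · rw [Nat.le_div_iff_mul_le (by omega)]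
    exact key
  · intro hle
    subst hle
    simpa using key
end

section
/- Let R be a collection of distinct sets, each of size at most r, such that every subset of size t+1 of the universe is contained in at most f sets of R, and suppose R contains a maximal (r,t)-set packing M of size at most k-1 (maximal meaning every set of R not in M intersects some set of M in at least t+1 elements). Then |R| ≤ (k-1) · C(r,t+1) · f. -/
/-!
Every set of `R` shares at least `t + 1` elements with some member of `M` (with itself if it lies
in `M`, by maximality otherwise), hence contains a `(t + 1)`-subset of a member of `M`. There are
at most `|M| · C(r, t + 1)` such subsets, and each lies in at most `f` sets of `R`.
-/

namespace Finset

variable {α : Type*} [DecidableEq α]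

theorem card_le_card_mul_of_forall_exists_subset {R T : Finset (Finset α)} {f : ℕ}
    (hcover : ∀ S ∈ R, ∃ P ∈ T, P ⊆ S) (hbound : ∀ P ∈ T, #{S ∈ R | P ⊆ S} ≤ f) :
    #R ≤ #T * f :=
  calc #R ≤ #(T.biUnion fun P => {S ∈ R | P ⊆ S}) := by
        refine card_le_card fun S hS => ?_
        obtain ⟨P, hPT, hPS⟩ := hcover S hS
        exact mem_biUnion.2 ⟨P, hPT, mem_filter.2 ⟨hS, hPS⟩⟩
    _ ≤ ∑ P ∈ T, #{S ∈ R | P ⊆ S} := card_biUnion_le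
    _ ≤ #T * f := (sum_le_card_nsmul _ _ _ hbound).trans_eq (smul_eq_mul _ _)

theorem card_biUnion_powersetCard_le {M : Finset (Finset α)} {r : ℕ}
    (hM : ∀ S ∈ M, #S ≤ r) (n : ℕ) :
    #(M.biUnion (powersetCard n)) ≤ #M * r.choose n :=
  calc #(M.biUnion (powersetCard n)) ≤ ∑ S ∈ M, #(powersetCard n S) := card_biUnion_le
    _ ≤ #M * r.choose n := by
        refine (sum_le_card_nsmul _ _ _ fun S hS => ?_).trans_eq (smul_eq_mul _ _)
        rw [card_powersetCard]
        exact Nat.choose_le_choose n (hM S hS)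

theorem exists_mem_biUnion_powersetCard_subset {S S' : Finset α} {M : Finset (Finset α)}
    {n : ℕ} (hS' : S' ∈ M) (hn : n ≤ #(S ∩ S')) :
    ∃ P ∈ M.biUnion (powersetCard n), P ⊆ S := by
  obtain ⟨P, hPsub, hPcard⟩ := exists_subset_card_eq hn
  exact ⟨P, mem_biUnion.2 ⟨S', hS', mem_powersetCard.2 ⟨hPsub.trans inter_subset_right, hPcard⟩⟩,
    hPsub.trans inter_subset_left⟩

end Finset

open Finset

theorem stmt12_general {α : Type*} [DecidableEq α] (r t k f : ℕ)
    (R M : Finset (Finset α))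
    (hsize : ∀ S ∈ R, t + 1 ≤ S.card ∧ S.card ≤ r)
    (hbound : ∀ P : Finset α, P.card = t + 1 →
      (R.filter (fun S => P ⊆ S)).card ≤ f)
    (hM : M ⊆ R) (hMk : M.card ≤ k - 1)
    (hmax : ∀ S ∈ R, S ∉ M → ∃ S' ∈ M, t + 1 ≤ (S ∩ S').card) :
    R.card ≤ (k - 1) * Nat.choose r (t + 1) * f := by
  have hcover : ∀ S ∈ R, ∃ P ∈ M.biUnion (powersetCard (t + 1)), P ⊆ S := by
    intro S hS
    by_cases hSM : S ∈ M
    · exact exists_mem_biUnion_powersetCard_subset hSM (by rw [inter_self]; exact (hsize S hS).1)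
    · obtain ⟨S', hS'M, hcard⟩ := hmax S hS hSM
      exact exists_mem_biUnion_powersetCard_subset hS'M hcard
  have hfilter : ∀ P ∈ M.biUnion (powersetCard (t + 1)), #{S ∈ R | P ⊆ S} ≤ f := by
    intro P hP
    obtain ⟨_, _, hPS'⟩ := mem_biUnion.1 hP
    exact hbound P (mem_powersetCard.1 hPS').2
  calc R.card ≤ #(M.biUnion (powersetCard (t + 1))) * f :=
        card_le_card_mul_of_forall_exists_subset hcover hfilter
    _ ≤ (k - 1) * Nat.choose r (t + 1) * f := by
        gcongr
        exact (card_biUnion_powersetCard_le (fun S hS => (hsize S (hM hS)).2) _).trans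
          (Nat.mul_le_mul_right _ hMk)

theorem stmt12 {α : Type*} [DecidableEq α] (r t k f : ℕ)
    (R M : Finset (Finset α))
    (hsize : ∀ S ∈ R, t + 1 ≤ S.card ∧ S.card ≤ r)
    (hbound : ∀ P : Finset α, P.card = t + 1 →
      (R.filter (fun S => P ⊆ S)).card ≤ f)
    (hM : M ⊆ R) (hMk : M.card ≤ k - 1)
    (hMpack : ∀ S ∈ M, ∀ S' ∈ M, S ≠ S' → (S ∩ S').card ≤ t)
    (hmax : ∀ S ∈ R, S ∉ M → ∃ S' ∈ M, t + 1 ≤ (S ∩ S').card) :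
    R.card ≤ (k - 1) * Nat.choose r (t + 1) * f :=
  stmt12_general r t k f R M hsize hbound hM hMk hmax
end
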